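/- arXiv:2105.12570 — 4 statements merged into one kernel-verified Lean document; each statement's English description precedes it below -/
import Mathlib

section
/- Let α, β be elements of a nonarchimedean local field K_v of residue characteristic p > 2 and ramification index e over ℚ_p, admitting continued fraction expansions with respect to a fixed floor function s (satisfying |x - s(x)|_v < 1 and s(x) = s(y) whenever |x - y|_v < 1, and |a|_v ≥ p^{1/e} for nonzero partial quotients). If the first n+1 partial quotients of α and β coincide, then |α - β|_v < p^{-2n/e}. -/
/-- If two elements of a nonarchimedean local field of residue characteristic `p > 2`
and ramification index `e` have continued fraction expansions (w.r.t. a fixed floor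
function `s`) whose first `n+1` partial quotients coincide, then
`|α - β| < p^(-2n/e)`. -/
theorem stmt_13 {K : Type*} [Field K] (abv : AbsoluteValue K ℝ)
    (hna : IsNonarchimedean (fun x => abv x))
    (p : ℕ) (hp : p.Prime) (hodd : 2 < p) (e : ℕ) (he : 1 ≤ e)
    (s : K → K)
    (hfloor : ∀ x, abv (x - s x) < 1)
    (hloc : ∀ x y, abv (x - y) < 1 → s x = s y)
    (α β : K) (αseq βseq : ℕ → K)
    (hα0 : αseq 0 = α) (hβ0 : βseq 0 = β)
    (hαne : ∀ k, αseq k - s (αseq k) ≠ 0)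
    (hβne : ∀ k, βseq k - s (βseq k) ≠ 0)
    (hαstep : ∀ k, αseq (k + 1) = (αseq k - s (αseq k))⁻¹)
    (hβstep : ∀ k, βseq (k + 1) = (βseq k - s (βseq k))⁻¹)
    (hαbig : ∀ k, 1 ≤ k → (p : ℝ) ^ ((1 : ℝ) / e) ≤ abv (s (αseq k)))
    (hβbig : ∀ k, 1 ≤ k → (p : ℝ) ^ ((1 : ℝ) / e) ≤ abv (s (βseq k)))
    (n : ℕ)
    (hsame : ∀ k, k ≤ n → s (αseq k) = s (βseq k)) :
    abv (α - β) < (p : ℝ) ^ (-(2 * (n : ℝ)) / e) := by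
  have hpR : (1:ℝ) < p := by exact_mod_cast hp.one_lt
  have hppos : (0:ℝ) < p := lt_trans one_pos hpR
  have heR : (1:ℝ) ≤ e := by exact_mod_cast he
  have hepos : (0:ℝ) < e := lt_of_lt_of_le one_pos heR
  set P : ℝ := (p:ℝ) ^ ((1:ℝ)/e) with hPdef
  have hP1 : 1 < P := Real.one_lt_rpow_iff_of_pos hppos |>.mpr (Or.inl ⟨hpR, by positivity⟩)
  have hPpos : 0 < P := lt_trans one_pos hP1
  -- |αseq (k+1)| ≥ P
  have habs : ∀ (γ : ℕ → K), (∀ k, 1 ≤ k → P ≤ abv (s (γ k))) →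
      ∀ k, P ≤ abv (γ (k+1)) := by
    intro γ hbig k
    have h1 : P ≤ abv (s (γ (k+1))) := hbig (k+1) (by omega)
    have h2 : abv (γ (k+1) - s (γ (k+1))) < 1 := hfloor _
    have h3 : abv (s (γ (k+1))) ≤ max (abv (γ (k+1))) (abv (s (γ (k+1)) - γ (k+1))) := by
      have := hna (γ (k+1)) (s (γ (k+1)) - γ (k+1))
      simpa using this
    rw [abv.map_sub] at h3
    rcases le_max_iff.mp h3 with h | h
    · exact le_trans h1 h
    · exact absurd (lt_of_le_of_lt (le_trans h1 h) h2) (by linarith)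
  have hαabs := habs αseq hαbig
  have hβabs := habs βseq hβbig
  have hαnz : ∀ k, αseq (k+1) ≠ 0 := fun k => by
    rw [hαstep k]; exact inv_ne_zero (hαne k)
  have hβnz : ∀ k, βseq (k+1) ≠ 0 := fun k => by
    rw [hβstep k]; exact inv_ne_zero (hβne k)
  have key : ∀ j, j ≤ n → abv (αseq (n - j) - βseq (n - j)) < (p:ℝ) ^ (-(2*(j:ℝ))/e) := by
    intro j
    induction j with
    | zero =>
      intro _
      have heq : αseq n - βseq n = (αseq n - s (αseq n)) + -(βseq n - s (βseq n)) := by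
        rw [hsame n le_rfl]; ring
      have := hna (αseq n - s (αseq n)) (-(βseq n - s (βseq n)))
      simp only [Nat.sub_zero, heq]
      calc abv ((αseq n - s (αseq n)) + -(βseq n - s (βseq n)))
          ≤ max (abv (αseq n - s (αseq n))) (abv (-(βseq n - s (βseq n)))) := this
        _ < (p:ℝ) ^ (-(2*((0:ℕ):ℝ))/e) := by
            rw [abv.map_neg]
            have h1 := hfloor (αseq n)
            have h2 := hfloor (βseq n)
            have : (-(2*((0:ℕ):ℝ))/e) = 0 := by norm_num
            rw [this, Real.rpow_zero]
            exact max_lt h1 h2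
    | succ j ih =>
      intro hj
      have ihj := ih (by omega)
      set k := n - (j+1) with hk
      have hk1 : k + 1 = n - j := by omega
      have hkn : k ≤ n := by omega
      have ha : αseq k - s (αseq k) = (αseq (k+1))⁻¹ := by rw [hαstep k, inv_inv]
      have hb : βseq k - s (βseq k) = (βseq (k+1))⁻¹ := by rw [hβstep k, inv_inv]
      have hdiff : αseq k - βseq k = (βseq (k+1) - αseq (k+1)) / (αseq (k+1) * βseq (k+1)) := by
        have hs := hsame k hkn
        have : αseq k - βseq k = (αseq k - s (αseq k)) - (βseq k - s (βseq k)) := by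
          rw [hs]; ring
        rw [this, ha, hb, inv_sub_inv (hαnz k) (hβnz k)]
      rw [hdiff, map_div₀, map_mul]
      have hnum : abv (βseq (k+1) - αseq (k+1)) < (p:ℝ) ^ (-(2*(j:ℝ))/e) := by
        rw [abv.map_sub, hk1]; exact ihj
      have hfin : (p:ℝ) ^ (-(2*(j:ℝ))/e) / (P * P) = (p:ℝ) ^ (-(2*((j:ℕ)+1:ℝ))/e) := by
        rw [hPdef, ← Real.rpow_add hppos, ← Real.rpow_sub hppos]
        congr 1
        field_simp
        ring
      calc abv (βseq (k+1) - αseq (k+1)) / (abv (αseq (k+1)) * abv (βseq (k+1)))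
          < (p:ℝ) ^ (-(2*(j:ℝ))/e) / (P * P) := by
            gcongr <;> first | exact hnum | exact hαabs k | exact hβabs k | positivity
        _ = (p:ℝ) ^ (-(2*((j+1:ℕ):ℝ))/e) := by rw [hfin]; norm_num
  have := key n le_rfl
  simpa [hα0, hβ0] using this
end

section
/- With the continued fraction algorithm attached to a floor function s on a nonarchimedean field (|x-s(x)| < 1, s(x)=s(y) when |x-y|<1), set ε_n(α) = 1/|V_{n-1}(α)| = ∏_{j=1}^{n} 1/|a_j(α)| with ε_0 = 1. If the expansion of α has length ≥ n and |α - α'| < ε_n(α)², then the expansion of α' has length ≥ n and the first n+1 partial quotients of α and α' agree. -/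
/-!
Let `x_k`, `y_k` be the complete quotients of `α`, `α'` and `r_k = |x_k - a_k|`, so that
`r_k = 1/|a_{k+1}| < 1` and `ε_n(α) = r_0 ⋯ r_{n-1}`. As long as `|x_k - y_k| < r_k²`, the
ultrametric inequality gives `s y_k = a_k` and `|y_k - a_k| = r_k`, hence
`|x_{k+1} - y_{k+1}| = |x_k - y_k| / r_k²`. By induction `|x_k - y_k| < (r_k ⋯ r_{n-1})²` for
`k ≤ n`; this is at most `1`, and at most `r_k²` when `k < n`.
-/

open Finset

theorem AbsoluteValue.apply_inv_sub_inv {K : Type*} [Field K] (abv : AbsoluteValue K ℝ) {a b : K}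
    (ha : a ≠ 0) (hb : b ≠ 0) : abv (a⁻¹ - b⁻¹) = abv (a - b) / (abv a * abv b) := by
  rw [inv_sub_inv' ha hb, map_mul, map_mul, map_inv₀, map_inv₀, abv.map_sub]
  field_simp

theorem Finset.sq_prod_Ico_le_sq_left {r : ℕ → ℝ} {k n : ℕ} (hk : k < n)
    (h0 : ∀ j, 0 ≤ r j) (h1 : ∀ j < n, r j ≤ 1) : (∏ j ∈ Ico k n, r j) ^ 2 ≤ r k ^ 2 := by
  refine pow_le_pow_left₀ (prod_nonneg fun j _ => h0 j) ?_ 2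
  rw [prod_eq_prod_Ico_succ_bot hk]
  exact mul_le_of_le_one_right (h0 k)
    (prod_le_one (fun j _ => h0 j) fun j hj => h1 j (mem_Ico.mp hj).2)

namespace FloorContinuedFraction

variable {K : Type*} [Field K] {abv : AbsoluteValue K ℝ} {s : K → K}

def completeQuotient (s : K → K) (x : K) (k : ℕ) : K :=
  (fun y => (y - s y)⁻¹)^[k] x

theorem completeQuotient_succ (s : K → K) (x : K) (k : ℕ) :
    completeQuotient s x (k + 1) = (completeQuotient s x k - s (completeQuotient s x k))⁻¹ :=
  Function.iterate_succ_apply' _ k x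

theorem abv_sub_floor_pos {x y : K} (hxy : abv (x - y) < abv (x - s x) ^ 2) :
    0 < abv (x - s x) := by
  by_contra! h
  nlinarith [abv.nonneg (x - y), abv.nonneg (x - s x)]

variable (hna : IsNonarchimedean abv)
include hna

theorem abv_sub_floor_eq_inv (hfloor : ∀ x, abv (x - s x) < 1) {x : K}
    (h : 1 < abv (s (x - s x)⁻¹)) : abv (x - s x) = (abv (s (x - s x)⁻¹))⁻¹ := by
  have hz : abv (s (x - s x)⁻¹ + ((x - s x)⁻¹ - s (x - s x)⁻¹)) = abv (s (x - s x)⁻¹) :=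
    hna.add_eq_left_of_lt ((hfloor _).trans h)
  rw [add_sub_cancel, map_inv₀] at hz
  rw [← hz, inv_inv]

variable (hloc : ∀ x y, abv (x - y) < 1 → s x = s y)
include hloc

theorem floor_eq_of_abv_sub_lt_sq {x y : K} (hr : abv (x - s x) < 1)
    (hxy : abv (x - y) < abv (x - s x) ^ 2) :
    s y = s x ∧ abv (y - s y) = abv (x - s x) := by
  have hxy' : abv (x - y) < abv (x - s x) :=
    hxy.trans_le (pow_le_of_le_one (abv.nonneg _) hr.le two_ne_zero)
  have hs : s y = s x := hloc y x (by rw [abv.map_sub]; exact hxy'.trans hr)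
  refine ⟨hs, ?_⟩
  rw [hs, show y - s x = (x - s x) + (y - x) by ring]
  exact hna.add_eq_left_of_lt (by rwa [abv.map_sub])

theorem abv_inv_sub_inv_eq {x y : K} (hr : abv (x - s x) < 1)
    (hxy : abv (x - y) < abv (x - s x) ^ 2) :
    abv ((x - s x)⁻¹ - (y - s y)⁻¹) = abv (x - y) / abv (x - s x) ^ 2 := by
  obtain ⟨hs, hdist⟩ := floor_eq_of_abv_sub_lt_sq hna hloc hr hxy
  have hne : abv (x - s x) ≠ 0 := (abv_sub_floor_pos hxy).ne'
  rw [abv.apply_inv_sub_inv (abv.ne_zero_iff.mp hne) (abv.ne_zero_iff.mp (hdist ▸ hne)), hdist, hs,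
    sub_sub_sub_cancel_right, sq]

variable {x y : ℕ → K} {n : ℕ} (hx : ∀ k < n, x (k + 1) = (x k - s (x k))⁻¹)
  (hy : ∀ k < n, y (k + 1) = (y k - s (y k))⁻¹) (hr : ∀ k < n, abv (x k - s (x k)) < 1)
  (h0 : abv (x 0 - y 0) < (∏ j ∈ range n, abv (x j - s (x j))) ^ 2)
include hx hy hr h0

theorem abv_sub_lt_sq_prod_Ico :
    ∀ k ≤ n, abv (x k - y k) < (∏ j ∈ Ico k n, abv (x j - s (x j))) ^ 2 := by
  intro k hk
  induction k with
  | zero => rwa [← range_eq_Ico]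
  | succ k ih =>
    have hkn : k < n := hk
    have hxy : abv (x k - y k) < abv (x k - s (x k)) ^ 2 := (ih hkn.le).trans_le
      (sq_prod_Ico_le_sq_left hkn (fun _ => abv.nonneg _) fun j hj => (hr j hj).le)
    rw [hx k hkn, hy k hkn, abv_inv_sub_inv_eq hna hloc (hr k hkn) hxy,
      div_lt_iff₀ (pow_pos (abv_sub_floor_pos hxy) 2), ← mul_pow, mul_comm,
      ← prod_eq_prod_Ico_succ_bot hkn fun j => abv (x j - s (x j))]
    exact ih hkn.le

theorem floor_eq_and_ne_floor :
    (∀ k ≤ n, s (y k) = s (x k)) ∧ ∀ k < n, y k ≠ s (y k) := by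
  have key := abv_sub_lt_sq_prod_Ico hna hloc hx hy hr h0
  refine ⟨fun k hk => hloc _ _ ?_, fun k hk => ?_⟩
  · rw [abv.map_sub]
    exact (key k hk).trans_le (pow_le_one₀ (prod_nonneg fun _ _ => abv.nonneg _)
      (prod_le_one (fun _ _ => abv.nonneg _) fun j hj => (hr j (mem_Ico.mp hj).2).le))
  · have hxy : abv (x k - y k) < abv (x k - s (x k)) ^ 2 := (key k hk.le).trans_le
      (sq_prod_Ico_le_sq_left hk (fun _ => abv.nonneg _) fun j hj => (hr j hj).le)
    obtain ⟨-, hdist⟩ := floor_eq_of_abv_sub_lt_sq hna hloc (hr k hk) hxy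
    exact sub_ne_zero.mp (abv.pos_iff.mp (hdist ▸ abv_sub_floor_pos hxy))

end FloorContinuedFraction

open FloorContinuedFraction in
/-- If the continued fraction expansion of `α` (attached to a floor function `s` on a
nonarchimedean field) has length at least `n` and `|α - α'| < ε_n(α)²` where
`ε_n(α) = ∏_{j=1}^n |a_j(α)|⁻¹`, then the expansion of `α'` also has length at least `n`
and the first `n+1` partial quotients of `α` and `α'` agree. -/
theorem stmt_14 {K : Type*} [Field K] (abv : AbsoluteValue K ℝ)
    (hna : IsNonarchimedean (fun x => abv x))
    (s : K → K)
    (hfloor : ∀ x, abv (x - s x) < 1)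
    (hloc : ∀ x y, abv (x - y) < 1 → s x = s y)
    (α α' : K) (n : ℕ) (αseq : ℕ → K)
    (hα0 : αseq 0 = α)
    (hlen : ∀ k, k < n → αseq k ≠ s (αseq k) ∧ αseq (k + 1) = (αseq k - s (αseq k))⁻¹)
    (hbig : ∀ k, 1 ≤ k → k ≤ n → 1 < abv (s (αseq k)))
    (hclose : abv (α - α') < (∏ j ∈ Finset.Icc 1 n, (abv (s (αseq j)))⁻¹) ^ 2) :
    ∃ βseq : ℕ → K, βseq 0 = α' ∧
      (∀ k, k < n → βseq k ≠ s (βseq k) ∧ βseq (k + 1) = (βseq k - s (βseq k))⁻¹) ∧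
      ∀ k, k ≤ n → s (βseq k) = s (αseq k) := by
  have hdist : ∀ k < n, abv (αseq k - s (αseq k)) = (abv (s (αseq (k + 1))))⁻¹ := by
    intro k hk
    have h := hbig (k + 1) (Nat.le_add_left 1 k) hk
    rw [(hlen k hk).2] at h ⊢
    exact abv_sub_floor_eq_inv hna hfloor h
  have hr : ∀ k < n, abv (αseq k - s (αseq k)) < 1 := fun k hk => by
    rw [hdist k hk]
    exact inv_lt_one_of_one_lt₀ (hbig (k + 1) (Nat.le_add_left 1 k) hk)
  have hprod : ∏ j ∈ Icc 1 n, (abv (s (αseq j)))⁻¹ =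
      ∏ j ∈ range n, abv (αseq j - s (αseq j)) := by
    rw [range_eq_Ico]
    exact (prod_Ico_add' (fun j => (abv (s (αseq j)))⁻¹) 0 n 1).symm.trans
      (prod_congr rfl fun j hj => (hdist j (mem_Ico.mp hj).2).symm)
  obtain ⟨hfloor_eq, hne⟩ := floor_eq_and_ne_floor hna hloc (fun k hk => (hlen k hk).2)
    (fun k _ => completeQuotient_succ s α' k) hr (by rwa [hα0, ← hprod])
  exact ⟨completeQuotient s α', rfl, fun k hk => ⟨hne k hk, completeQuotient_succ s α' k⟩,
    hfloor_eq⟩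
end

section
/- Let K be a number field whose ideal class group is cyclic generated by the class of a prime ideal 𝔓, let n₀ be the order of [𝔓], and η a generator of 𝔓^{n₀}. Then the ring 𝒪_{K,{v₀}} of elements of K integral at all finite places except the one corresponding to 𝔓 equals 𝒪_K[1/η]. -/
open NumberField IsDedekindDomain

/-!
Since `(η) = 𝔓^{n₀}` with `n₀ > 0`, `η` lies in `𝔓` and in no other prime, so it is a unit at
every place `w ≠ v₀` and has `v₀`-valuation `< 1`. Hence `η⁻¹` is a `{v₀}`-integer, and
conversely for a `{v₀}`-integer `x` some `η^m x` is integral at every place, i.e. lies in `𝒪_K`,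
so `x ∈ 𝒪_K[η⁻¹]`.
-/
theorem exists_pow_mul_le_one₀ {G : Type*} [LinearOrderedCommGroupWithZero G] [MulArchimedean G]
    {a : G} (ha : a < 1) (b : G) : ∃ n : ℕ, a ^ n * b ≤ 1 := by
  rcases eq_or_ne b 0 with rfl | hb
  · exact ⟨0, by simp⟩
  obtain ⟨n, hn⟩ := exists_pow_lt₀ ha (Units.mk0 b hb)⁻¹
  refine ⟨n, le_of_lt ?_⟩
  calc a ^ n * b < b⁻¹ * b := mul_lt_mul_of_pos_right (by simpa using hn) (zero_lt_iff.mpr hb)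
    _ = 1 := inv_mul_cancel₀ hb

namespace IsDedekindDomain.HeightOneSpectrum

variable {R : Type*} [CommRing R] [IsDedekindDomain R] {v w : HeightOneSpectrum R} {n : ℕ} {η : R}

theorem ne_zero_of_pow_eq_span (hη : v.asIdeal ^ n = Ideal.span {η}) : η ≠ 0 := by
  rintro rfl
  exact pow_ne_zero n v.ne_bot (by simpa using hη)

theorem intValuation_eq_one_of_pow_eq_span (hw : w ≠ v) (hη : v.asIdeal ^ n = Ideal.span {η}) :
    w.intValuation η = 1 := by
  rw [intValuation_eq_one_iff, ← Ideal.span_singleton_le_iff_mem, ← hη]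
  intro hle
  have hvw : v.asIdeal = w.asIdeal :=
    v.isMaximal.eq_of_le w.isPrime.ne_top (w.isPrime.le_of_pow_le hle)
  exact hw (HeightOneSpectrum.ext hvw.symm)

theorem intValuation_lt_one_of_pow_eq_span (hn : n ≠ 0) (hη : v.asIdeal ^ n = Ideal.span {η}) :
    v.intValuation η < 1 := by
  rw [intValuation_lt_one_iff_mem, ← Ideal.span_singleton_le_iff_mem, ← hη]
  exact Ideal.pow_le_self hn

end IsDedekindDomain.HeightOneSpectrum

open IsDedekindDomain.HeightOneSpectrum in
theorem Set.integer_singleton_eq_adjoin_inv {R : Type*} [CommRing R] [IsDedekindDomain R]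
    (K : Type*) [Field K] [Algebra R K] [IsFractionRing R K] {v : HeightOneSpectrum R} {n : ℕ}
    (hn : n ≠ 0) {η : R} (hη : v.asIdeal ^ n = Ideal.span {η}) :
    ({v} : Set (HeightOneSpectrum R)).integer K = Algebra.adjoin R {(algebraMap R K η)⁻¹} := by
  have hunit : ∀ w ∉ ({v} : Set _), w.valuation K (algebraMap R K η) = 1 := fun w hw => by
    rw [valuation_of_algebraMap, intValuation_eq_one_of_pow_eq_span hw hη]
  refine le_antisymm (fun x hx => ?_) (Algebra.adjoin_le ?_)
  · have hv : v.valuation K (algebraMap R K η) < 1 := by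
      rw [valuation_of_algebraMap]
      exact intValuation_lt_one_of_pow_eq_span hn hη
    obtain ⟨m, hm⟩ := exists_pow_mul_le_one₀ hv (v.valuation K x)
    obtain ⟨r, hr⟩ : algebraMap R K η ^ m * x ∈ (algebraMap R K).range := by
      refine mem_integers_of_valuation_le_one K _ fun w => ?_
      rw [map_mul, map_pow]
      by_cases hw : w = v
      · exact hw ▸ hm
      · rw [hunit w hw, one_pow, one_mul]
        exact hx w hw
    have hη0 : algebraMap R K η ≠ 0 := by
      simpa using ne_zero_of_pow_eq_span hη
    have : x = algebraMap R K r * (algebraMap R K η)⁻¹ ^ m := by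
      rw [hr, inv_pow, mul_comm, ← mul_assoc, inv_mul_cancel₀ (pow_ne_zero m hη0), one_mul]
    rw [this]
    exact mul_mem (Subalgebra.algebraMap_mem _ r)
      (pow_mem (Algebra.self_mem_adjoin_singleton R _) m)
  · rw [Set.singleton_subset_iff]
    intro w hw
    rw [map_inv₀, hunit w hw, inv_one]

theorem stmt_17_general (K : Type*) [Field K] [NumberField K]
    (v₀ : HeightOneSpectrum (𝓞 K))
    (hP : v₀.asIdeal ∈ nonZeroDivisors (Ideal (𝓞 K)))
    (n₀ : ℕ) (hn₀ : orderOf (ClassGroup.mk0 ⟨v₀.asIdeal, hP⟩) = n₀)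
    (η : 𝓞 K) (hη : v₀.asIdeal ^ n₀ = Ideal.span {η}) :
    {x : K | ∀ w : HeightOneSpectrum (𝓞 K), w ≠ v₀ → w.valuation K x ≤ 1} =
      (Algebra.adjoin (𝓞 K) {(algebraMap (𝓞 K) K η)⁻¹} : Subalgebra (𝓞 K) K) := by
  have hn : n₀ ≠ 0 := hn₀ ▸ (orderOf_pos _).ne'
  rw [← Set.integer_singleton_eq_adjoin_inv K hn hη]
  -- the carrier of `Set.integer` is by construction the set on the left
  rfl

/-- If the class group of `K` is generated by the class of a prime `𝔓` (corresponding
to the height-one prime `v₀`), `n₀` is the order of `[𝔓]` and `η` generates `𝔓^{n₀}`,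
then the ring of `{𝔓}`-integers `𝒪_{K,{v₀}}` equals `𝒪_K[1/η]`. -/
theorem stmt_17 (K : Type*) [Field K] [NumberField K]
    (v₀ : HeightOneSpectrum (𝓞 K))
    (hP : v₀.asIdeal ∈ nonZeroDivisors (Ideal (𝓞 K)))
    (hgen : ∀ c : ClassGroup (𝓞 K), c ∈ Subgroup.zpowers (ClassGroup.mk0 ⟨v₀.asIdeal, hP⟩))
    (n₀ : ℕ) (hn₀ : orderOf (ClassGroup.mk0 ⟨v₀.asIdeal, hP⟩) = n₀)
    (η : 𝓞 K) (hη : v₀.asIdeal ^ n₀ = Ideal.span {η}) :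
    {x : K | ∀ w : HeightOneSpectrum (𝓞 K), w ≠ v₀ → w.valuation K x ≤ 1} =
      (Algebra.adjoin (𝓞 K) {(algebraMap (𝓞 K) K η)⁻¹} : Subalgebra (𝓞 K) K) :=
  stmt_17_general K v₀ hP n₀ hn₀ η hη
end

section
/- Let K be a number field and 𝔓 a prime ideal of 𝒪_K with corresponding place v₀. Suppose every element of K can be written as A/B with A, B ∈ 𝒪_{K,{v₀}} generating the unit ideal of 𝒪_{K,{v₀}}. Then the ideal class group of K is generated by the class of 𝔓. -/
/-!
For a nonzero ideal `I = (b, a)` (Dedekind domains are two-generated), write `a / b = A / B`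
with `A, B` coprime `{𝔓}`-integers. A relation `x A + y B = 1` between `{𝔓}`-integers forces the
fractional ideal `(A, B)` to have valuation `0` at every prime `w ≠ 𝔓`, so `(A, B) = 𝔓 ^ n`.
Since `I = (b / B) (B, A)`, the class of `I` is `[𝔓] ^ n`.
-/

open NumberField IsDedekindDomain
open scoped nonZeroDivisors

namespace FractionalIdeal

variable {R : Type*} [CommRing R] {K : Type*} [Field K] [Algebra R K] [IsFractionRing R K]

theorem spanSingleton_algebraMap_le_one (r : R) :
    spanSingleton R⁰ (algebraMap R K r) ≤ 1 := by
  rw [← coeIdeal_span_singleton]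
  exact coeIdeal_le_one

theorem one_le_mul_of_mul_add_mul_eq_one {x y A B : K} (h : x * A + y * B = 1) :
    1 ≤ (spanSingleton R⁰ x + spanSingleton R⁰ y) *
      (spanSingleton R⁰ A + spanSingleton R⁰ B) := by
  rw [← spanSingleton_one, spanSingleton_le_iff_mem, ← h]
  refine mem_coe.mp <|
    add_mem (mem_coe.mpr (mul_mem_mul ?_ ?_)) (mem_coe.mpr (mul_mem_mul ?_ ?_)) <;>
    first
    | exact SetLike.le_def.mp le_self_add (mem_spanSingleton_self R⁰ _)
    | exact SetLike.le_def.mp le_add_self (mem_spanSingleton_self R⁰ _)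

variable [IsDedekindDomain R]

theorem count_spanSingleton_algebraMap_of_notMem {w : HeightOneSpectrum R} {s : R}
    (hs : s ∉ w.asIdeal) : count K w (spanSingleton R⁰ (algebraMap R K s)) = 0 := by
  have hs0 : Ideal.span {s} ≠ 0 := by
    rw [Submodule.zero_eq_bot, ne_eq, Ideal.span_singleton_eq_bot]
    rintro rfl
    exact hs w.asIdeal.zero_mem
  rw [← coeIdeal_span_singleton, count_coe K w hs0, Nat.cast_eq_zero]
  by_contra hdvd
  exact hs (Ideal.dvd_span_singleton.mp
    ((Associates.count_ne_zero_iff_dvd hs0 w.irreducible).mp hdvd))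

theorem count_nonneg_of_spanSingleton_mul_le_one {w : HeightOneSpectrum R}
    {J : FractionalIdeal R⁰ K} (hJ : J ≠ 0) {s : R} (hs : s ∉ w.asIdeal)
    (h : spanSingleton R⁰ (algebraMap R K s) * J ≤ 1) : 0 ≤ count K w J := by
  have hs0 : spanSingleton R⁰ (algebraMap R K s) ≠ 0 := by
    rw [ne_eq, spanSingleton_eq_zero_iff, (IsFractionRing.injective R K).eq_iff' (map_zero _)]
    rintro rfl
    exact hs w.asIdeal.zero_mem
  have := count_mono K w (mul_ne_zero hs0 hJ) h
  rwa [count_one, count_mul K w hs0 hJ, count_spanSingleton_algebraMap_of_notMem hs,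
    zero_add] at this

variable {S : Set (HeightOneSpectrum R)}

theorem count_spanSingleton_add_spanSingleton_nonneg {w : HeightOneSpectrum R} (hw : w ∉ S)
    {A B : K} (hA : A ∈ S.integer K) (hB : B ∈ S.integer K)
    (hAB : spanSingleton R⁰ A + spanSingleton R⁰ B ≠ 0) :
    0 ≤ count K w (spanSingleton R⁰ A + spanSingleton R⁰ B) := by
  obtain ⟨a, ⟨s, hs⟩, has⟩ := w.exists_primeCompl_mul_eq_of_integer A (hA w hw)
  obtain ⟨b, ⟨t, ht⟩, hbt⟩ := w.exists_primeCompl_mul_eq_of_integer B (hB w hw)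
  refine count_nonneg_of_spanSingleton_mul_le_one hAB (s := s * t)
    (w.isPrime.mul_notMem hs ht) ?_
  have hA' : algebraMap R K (s * t) * A = algebraMap R K (a * t) := by
    simp only [map_mul, ← has]; ring
  have hB' : algebraMap R K (s * t) * B = algebraMap R K (s * b) := by
    simp only [map_mul, ← hbt]; ring
  rw [mul_add, spanSingleton_mul_spanSingleton, spanSingleton_mul_spanSingleton, hA', hB',
    ← sup_eq_add]
  exact sup_le (spanSingleton_algebraMap_le_one _) (spanSingleton_algebraMap_le_one _)

theorem spanSingleton_add_spanSingleton_ne_zero_of_isCoprime {A B : S.integer K}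
    (hAB : IsCoprime A B) : spanSingleton R⁰ (A : K) + spanSingleton R⁰ (B : K) ≠ 0 := by
  obtain ⟨x, y, hxy⟩ := hAB
  exact right_ne_zero_of_mul
    (zero_lt_one.trans_le (one_le_mul_of_mul_add_mul_eq_one (congrArg Subtype.val hxy))).ne'

theorem count_spanSingleton_add_spanSingleton_eq_zero_of_isCoprime {w : HeightOneSpectrum R}
    (hw : w ∉ S) {A B : S.integer K} (hAB : IsCoprime A B) :
    count K w (spanSingleton R⁰ (A : K) + spanSingleton R⁰ (B : K)) = 0 := by
  obtain ⟨x, y, hxy⟩ := hAB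
  have h1 := one_le_mul_of_mul_add_mul_eq_one (R := R) (congrArg Subtype.val hxy)
  have hJJ' := (zero_lt_one.trans_le h1).ne'
  have hJ' := left_ne_zero_of_mul hJJ'
  have hJ := right_ne_zero_of_mul hJJ'
  have hle := count_mono K w one_ne_zero h1
  rw [count_one, count_mul K w hJ' hJ] at hle
  have := count_spanSingleton_add_spanSingleton_nonneg hw x.2 y.2 hJ'
  have := count_spanSingleton_add_spanSingleton_nonneg hw A.2 B.2 hJ
  omega

theorem exists_zpow_eq_spanSingleton_add_spanSingleton_of_isCoprime {v₀ : HeightOneSpectrum R}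
    {A B : ({v₀} : Set (HeightOneSpectrum R)).integer K} (hAB : IsCoprime A B) :
    ∃ n : ℤ, spanSingleton R⁰ (A : K) + spanSingleton R⁰ (B : K) =
      (v₀.asIdeal : FractionalIdeal R⁰ K) ^ n := by
  refine ⟨count K v₀ (spanSingleton R⁰ (A : K) + spanSingleton R⁰ (B : K)), ?_⟩
  conv_lhs => rw [← finprod_heightOneSpectrum_factorization' K
    (spanSingleton_add_spanSingleton_ne_zero_of_isCoprime hAB)]
  refine finprod_eq_single _ v₀ fun w hw => ?_
  rw [count_spanSingleton_add_spanSingleton_eq_zero_of_isCoprime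
    (Set.notMem_singleton_iff.mpr hw) hAB, zpow_zero]

theorem spanSingleton_add_spanSingleton_eq_mul {a b A B : K} (hb : b ≠ 0) (hB : B ≠ 0)
    (h : a / b = A / B) :
    spanSingleton R⁰ b + spanSingleton R⁰ a =
      spanSingleton R⁰ (b / B) * (spanSingleton R⁰ B + spanSingleton R⁰ A) := by
  rw [mul_add, spanSingleton_mul_spanSingleton, spanSingleton_mul_spanSingleton,
    div_mul_cancel₀ b hB, div_mul_eq_mul_div, mul_div_assoc, ← h, mul_div_cancel₀ a hb]

end FractionalIdeal

namespace ClassGroup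

variable {R : Type*} [CommRing R] [IsDedekindDomain R]
  {K : Type*} [Field K] [Algebra R K] [IsFractionRing R K]

theorem mk0_eq_zpow_of_coeIdeal_eq {I P : (Ideal R)⁰} {n : ℤ} {c : K}
    (h : ((I : Ideal R) : FractionalIdeal R⁰ K) = FractionalIdeal.spanSingleton R⁰ c *
      ((P : Ideal R) : FractionalIdeal R⁰ K) ^ n) :
    mk0 I = mk0 P ^ n := by
  have hc : c ≠ 0 := by
    rintro rfl
    rw [FractionalIdeal.spanSingleton_zero, zero_mul] at h
    exact (FractionalIdeal.mk0 K I).ne_zero h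
  have hu : FractionalIdeal.mk0 K I =
      toPrincipalIdeal R K (Units.mk0 c hc) * FractionalIdeal.mk0 K P ^ n := by
    ext1
    simpa using h
  rw [← mk_mk0 K, ← mk_mk0 K, hu, map_mul, map_zpow, mk_eq_one_iff.mpr, one_mul]
  exact ⟨⟨c, by simp⟩⟩

theorem mem_zpowers_mk0_of_forall_eq_div {v₀ : HeightOneSpectrum R}
    (hP : v₀.asIdeal ∈ (Ideal R)⁰)
    (h : ∀ α : K, ∃ A B : ({v₀} : Set (HeightOneSpectrum R)).integer K,
      (B : K) ≠ 0 ∧ α = A / B ∧ IsCoprime A B) (c : ClassGroup R) :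
    c ∈ Subgroup.zpowers (mk0 ⟨v₀.asIdeal, hP⟩) := by
  obtain ⟨⟨I, hI⟩, rfl⟩ := mk0_surjective c
  obtain ⟨b, hbI, hb⟩ :=
    Submodule.exists_mem_ne_zero_of_ne_bot (mem_nonZeroDivisors_iff_ne_zero.mp hI)
  obtain ⟨a, rfl⟩ := IsDedekindDomain.exists_eq_span_pair hbI hb
  obtain ⟨A, B, hB, hα, hAB⟩ := h (algebraMap R K a / algebraMap R K b)
  obtain ⟨n, hn⟩ :=
    FractionalIdeal.exists_zpow_eq_spanSingleton_add_spanSingleton_of_isCoprime hAB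
  refine ⟨n, (mk0_eq_zpow_of_coeIdeal_eq (K := K) (c := algebraMap R K b / B) ?_).symm⟩
  rw [← hn, add_comm, ← FractionalIdeal.spanSingleton_add_spanSingleton_eq_mul
    ((IsFractionRing.injective R K).ne_iff' (map_zero _) |>.mpr hb) hB hα]
  dsimp only
  rw [Ideal.span_insert, FractionalIdeal.coeIdeal_sup, FractionalIdeal.coeIdeal_span_singleton,
    FractionalIdeal.coeIdeal_span_singleton]

end ClassGroup

/-- If every element of `K` is a quotient `A/B` of two `{𝔓}`-integers generating the
unit ideal of the ring of `{𝔓}`-integers, then the class group of `K` is generated by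
the class of `𝔓`. -/
theorem stmt_18 (K : Type*) [Field K] [NumberField K]
    (v₀ : HeightOneSpectrum (𝓞 K))
    (hP : v₀.asIdeal ∈ nonZeroDivisors (Ideal (𝓞 K)))
    (h : ∀ α : K, ∃ A B : K,
      (∀ w : HeightOneSpectrum (𝓞 K), w ≠ v₀ → w.valuation K A ≤ 1) ∧
      (∀ w : HeightOneSpectrum (𝓞 K), w ≠ v₀ → w.valuation K B ≤ 1) ∧
      B ≠ 0 ∧ α = A / B ∧
      ∃ x y : K,
        (∀ w : HeightOneSpectrum (𝓞 K), w ≠ v₀ → w.valuation K x ≤ 1) ∧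
        (∀ w : HeightOneSpectrum (𝓞 K), w ≠ v₀ → w.valuation K y ≤ 1) ∧
        x * A + y * B = 1) :
    ∀ c : ClassGroup (𝓞 K), c ∈ Subgroup.zpowers (ClassGroup.mk0 ⟨v₀.asIdeal, hP⟩) := by
  refine ClassGroup.mem_zpowers_mk0_of_forall_eq_div (K := K) hP fun α => ?_
  obtain ⟨A, B, hA, hB, hB0, hα, x, y, hx, hy, hxy⟩ := h α
  exact ⟨⟨A, hA⟩, ⟨B, hB⟩, hB0, hα, ⟨x, hx⟩, ⟨y, hy⟩, Subtype.ext hxy⟩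
end
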